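/- arXiv:1208.0763 — 2 statements merged into one kernel-verified Lean document; each statement's English description precedes it below -/
import Mathlib

section
/- Let τ be a stopping time for the canonical filtration on the Skorohod space Ω, let ω ∈ Ω and s ≥ τ(ω). If H is an F_s^{τ(ω)}-measurable random variable on the shifted space Ω^{τ(ω)}, then there exists an F_s-measurable random variable H̃ on Ω such that H(ω̃) = H̃(ω ⊗_{τ(ω)} ω̃) for all ω̃ ∈ Ω^{τ(ω)}. Explicitly, H̃(ω₁) := H(ω₁^{τ(ω)}) works. -/
open Filter Set MeasureTheory

/-- The canonical path space: `ℝᵈ`-valued functions of time. -/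
abbrev PathSpace (d : ℕ) := ℝ → EuclideanSpace ℝ (Fin d)

/-- The σ-algebra on path space generated by the evaluations (the canonical process) at
times in `[t, s]`.  `pathFiltration d 0 s` is the canonical filtration `F_s`, and
`pathFiltration d t s` is the filtration `F^t_s` of the shifted canonical space `Ω^t`. -/
def pathFiltration (d : ℕ) (t s : ℝ) : MeasurableSpace (PathSpace d) :=
  ⨆ r ∈ Set.Icc t s, MeasurableSpace.comap (fun ω => ω r) inferInstance

/-- The concatenation `ω ⊗_t ω'` of two paths at time `t`. -/
noncomputable def concatPath {d : ℕ} (t : ℝ) (ω ω' : PathSpace d) : PathSpace d :=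
  fun r => if r < t then ω r else ω t + ω' r

/-- The path `ω` shifted at time `t`: `ω^t(r) := ω(r) − ω(t)`. -/
noncomputable def shiftPath {d : ℕ} (t : ℝ) (ω : PathSpace d) : PathSpace d :=
  fun r => ω r - ω t

lemma eval_meas (d : ℕ) (t s r : ℝ) (hr : r ∈ Set.Icc t s) :
    Measurable[pathFiltration d t s] (fun ω : PathSpace d => ω r) := by
  rw [measurable_iff_comap_le]
  exact le_iSup₂ (f := fun r (_ : r ∈ Set.Icc t s) =>
    MeasurableSpace.comap (fun ω : PathSpace d => ω r) inferInstance) r hr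

lemma eq_of_agree {d : ℕ} {t s : ℝ} {H : PathSpace d → ℝ}
    (hH : Measurable[pathFiltration d t s] H) {x y : PathSpace d}
    (h : ∀ r ∈ Set.Icc t s, x r = y r) : H x = H y := by
  set m₀ : MeasurableSpace (PathSpace d) :=
    { MeasurableSet' := fun A => (x ∈ A ↔ y ∈ A)
      measurableSet_empty := Iff.rfl
      measurableSet_compl := fun A hA => not_congr hA
      measurableSet_iUnion := fun f hf => by
        simp only [Set.mem_iUnion]; exact exists_congr hf } with hm₀
  have hle : pathFiltration d t s ≤ m₀ := by
    refine iSup₂_le fun r hr => ?_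
    rintro A ⟨B, _, rfl⟩
    show x ∈ (fun ω : PathSpace d => ω r) ⁻¹' B ↔ y ∈ (fun ω : PathSpace d => ω r) ⁻¹' B
    simp [Set.mem_preimage, h r hr]
  have h2 : MeasurableSet[m₀] (H ⁻¹' {H x}) := hle _ (hH (measurableSet_singleton (H x)))
  have h3 : x ∈ H ⁻¹' {H x} ↔ y ∈ H ⁻¹' {H x} := h2
  exact (h3.mp rfl).symm



/-- Let `τ` be a stopping time for the canonical filtration, `ω` a path and `s ≥ τ(ω)`.
If `H` is an `F_s^{τ(ω)}`-measurable random variable (on the shifted space), then there is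
an `F_s`-measurable random variable `H̃` such that `H(ω̃) = H̃(ω ⊗_{τ(ω)} ω̃)` for every path
`ω̃` of the shifted canonical space (i.e. with `ω̃(τ(ω)) = 0`).  Explicitly,
`H̃(ω₁) := H(ω₁^{τ(ω)})` works. -/
theorem stmt1 (d : ℕ) (T : ℝ) (τ : PathSpace d → ℝ)
    (hτ_stop : ∀ s : ℝ, MeasurableSet[pathFiltration d 0 s] {ω' | τ ω' ≤ s})
    (hτ_range : ∀ ω', τ ω' ∈ Set.Icc (0 : ℝ) T)
    (ω : PathSpace d) (s : ℝ) (hs : τ ω ≤ s)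
    (H : PathSpace d → ℝ)
    (hH : Measurable[pathFiltration d (τ ω) s] H) :
    ∃ Htilde : PathSpace d → ℝ,
      Measurable[pathFiltration d 0 s] Htilde ∧
      (∀ ω₁, Htilde ω₁ = H (shiftPath (τ ω) ω₁)) ∧
      ∀ ωtil : PathSpace d, ωtil (τ ω) = 0 →
        H ωtil = Htilde (concatPath (τ ω) ω ωtil) := by

  have ht0 : (0:ℝ) ≤ τ ω := (hτ_range ω).1
  have hshift : @Measurable _ _ (pathFiltration d 0 s) (pathFiltration d (τ ω) s)
      (shiftPath (τ ω)) := by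
    rw [measurable_iff_comap_le, pathFiltration]
    simp only [MeasurableSpace.comap_iSup]
    refine iSup₂_le fun r hr => ?_
    rw [MeasurableSpace.comap_comp, ← measurable_iff_comap_le]
    have heq : ((fun ω' : PathSpace d => ω' r) ∘ shiftPath (τ ω))
        = fun ω₁ : PathSpace d => ω₁ r - ω₁ (τ ω) := rfl
    rw [heq]
    exact (eval_meas d 0 s r ⟨ht0.trans hr.1, hr.2⟩).sub (eval_meas d 0 s (τ ω) ⟨ht0, hs⟩)
  refine ⟨fun ω₁ => H (shiftPath (τ ω) ω₁), hH.comp hshift, fun _ => rfl, ?_⟩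
  intro ωtil h0
  refine eq_of_agree hH fun r hr => ?_
  simp only [shiftPath, concatPath, not_lt.mpr hr.1, not_lt.mpr (le_refl (τ ω)), if_neg, lt_irrefl,
    if_false, h0]
  rw [add_zero, add_sub_cancel_left]
end

section
/- Let u(t,x) be bounded and continuous, φ ∈ C_b³([0,T)×ℝᵈ) with 0 = u(t₀,x₀) − φ(t₀,x₀) = min_{(t,x)} (u−φ)(t,x), and suppose the dynamic programming principle φ(t₀,x₀) ≥ sup_{P} Y_{t₀}^{P,t₀,x₀}(t₀+η, φ(t₀+η, B_{t₀+η}^{t₀,x₀})) holds for all small η > 0. Suppose moreover that for each constant pair (a,ν) ∈ D¹_f × (D²_f ∩ 𝔙^m) there exists a measure P(a,ν) in the class under which the characteristics of B equal (a,ν). If, for a positive càdlàg weight process M' with all moments of its supremum finite, the estimate ℒ^{t₀,x₀}φ(t₀,a,ν)·∫_{t₀}^{t₀+η} E^{P(a,ν)}[M'_s] ds ≤ C·η·(ρ(η) + ρ^{1/2}(√η) + η + η^{1/2}) holds, then dividing by η and letting η → 0 yields ℒ^{t₀,x₀}φ(t₀,a,ν) ≤ 0 for every (a,ν); taking the supremum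 over (a,ν) shows that u is a viscosity supersolution at (t₀,x₀) of −∂_t φ − ĥ(t₀,x₀,φ,Dφ,𝒦φ,D²φ,φ(t₀,x₀+·)) ≥ 0. -/
/-!
The weight `g(s) = E[M'_s]` is right-continuous at `t₀` by dominated convergence (the supremum
of `M'` is integrable) and `g(t₀) > 0`, so `∫_{t₀}^{t₀+η} g ≥ η g(t₀)/2` for small `η`. If
`ℒφ > 0`, the estimate then gives `ℒφ · g(t₀)/2 ≤ C(ρ(η) + √ρ(√η) + η + √η)`, whose right-hand
side vanishes as `η → 0⁺`. Hence `ℒφ ≤ 0` for every `(a, ν)`, and the supremum defining `ĥ`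
is at most `-∂ₜφ(t₀, x₀)`.
-/

open Filter Set MeasureTheory Topology

/-- `Tr(a D²ψ(x))`: the trace of the product of the matrix `a` with the Hessian of `ψ`
at `x`, written in the canonical basis of `ℝᵈ`. -/
noncomputable def trHess {d : ℕ} (a : Matrix (Fin d) (Fin d) ℝ)
    (ψ : EuclideanSpace ℝ (Fin d) → ℝ) (x : EuclideanSpace ℝ (Fin d)) : ℝ :=
  ∑ i, ∑ j, a i j *
    fderiv ℝ (fun y => fderiv ℝ ψ y (EuclideanSpace.single j (1 : ℝ))) x
      (EuclideanSpace.single i (1 : ℝ))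

/-- The operator `ℒ^{t₀,x₀}φ(t₀,a,ν) := ∂_tφ(t₀,x₀) + ½Tr(a D²φ(t₀,x₀))
+ ∫_E (Aφ)(x₀,e) ν(de) − f(t₀,x₀,φ(t₀,x₀),Dφ(t₀,x₀),𝒦φ(t₀,x₀,·),a,ν)`, where
`(Aφ)(x,e) = φ(x+e) − φ(x) − e·∇φ(x)` and `𝒦φ(t,x,e) = φ(t,x+e) − φ(t,x)`. -/
noncomputable def opL {d : ℕ} (φ : ℝ → EuclideanSpace ℝ (Fin d) → ℝ)
    (f : ℝ → EuclideanSpace ℝ (Fin d) → ℝ → EuclideanSpace ℝ (Fin d) →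
          (EuclideanSpace ℝ (Fin d) → ℝ) → Matrix (Fin d) (Fin d) ℝ →
          Measure (EuclideanSpace ℝ (Fin d)) → ℝ)
    (t₀ : ℝ) (x₀ : EuclideanSpace ℝ (Fin d))
    (a : Matrix (Fin d) (Fin d) ℝ) (ν : Measure (EuclideanSpace ℝ (Fin d))) : ℝ :=
  deriv (fun s => φ s x₀) t₀ + (1 / 2) * trHess a (φ t₀) x₀ +
    (∫ e, (φ t₀ (x₀ + e) - φ t₀ x₀ - fderiv ℝ (φ t₀) x₀ e) ∂ν) -
    f t₀ x₀ (φ t₀ x₀) (gradient (φ t₀) x₀) (fun e => φ t₀ (x₀ + e) - φ t₀ x₀) a ν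

lemma integral_pos_of_forall_pos {α : Type*} [MeasurableSpace α] {μ : Measure α} [NeZero μ]
    {f : α → ℝ} (hf : ∀ x, 0 < f x) (hfi : Integrable f μ) : 0 < ∫ x, f x ∂μ := by
  rw [integral_pos_iff_support_of_nonneg (fun x => (hf x).le) hfi,
    eq_univ_of_forall fun x => Function.mem_support.mpr (hf x).ne']
  exact (NeZero.ne (μ univ)).bot_lt

lemma continuousWithinAt_integral_of_integrable_iSup {Ω : Type*} [MeasurableSpace Ω] {μ : Measure Ω}
    {M : ℝ → Ω → ℝ} {t₀ T : ℝ} (ht₀ : t₀ < T) (hnonneg : ∀ s ω, 0 ≤ M s ω)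
    (hrc : ∀ ω, ContinuousWithinAt (fun r => M r ω) (Ici t₀) t₀)
    (hbdd : ∀ ω, BddAbove (range fun s : Icc t₀ T => M s ω))
    (hsup : Integrable (fun ω => ⨆ s : Icc t₀ T, M s ω) μ) (hint : ∀ s, Integrable (M s) μ) :
    ContinuousWithinAt (fun s => ∫ ω, M s ω ∂μ) (Ici t₀) t₀ := by
  have hIcc : Icc t₀ T ∈ 𝓝[≥] t₀ :=
    mem_of_superset (Ico_mem_nhdsGE_of_mem ⟨le_rfl, ht₀⟩) Ico_subset_Icc_self
  refine continuousWithinAt_of_dominated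
    (Eventually.of_forall fun s => (hint s).aestronglyMeasurable) ?_ hsup
    (Eventually.of_forall hrc)
  filter_upwards [hIcc] with s hs
  refine Eventually.of_forall fun ω => ?_
  rw [Real.norm_eq_abs, abs_of_nonneg (hnonneg s ω)]
  exact le_ciSup (hbdd ω) ⟨s, hs⟩

lemma eventually_mul_le_intervalIntegral {g : ℝ → ℝ} {t₀ η₀ c : ℝ} (hη₀ : 0 < η₀)
    (hg : ContinuousWithinAt g (Ici t₀) t₀) (hc : c < g t₀)
    (hgi : IntervalIntegrable g volume t₀ (t₀ + η₀)) :
    ∀ᶠ η in 𝓝[>] 0, η * c ≤ ∫ s in t₀..t₀ + η, g s := by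
  obtain ⟨v, hv, hIco⟩ :=
    mem_nhdsGE_iff_exists_Ico_subset.mp (hg.eventually (eventually_gt_nhds hc))
  have hsmall : Ioo 0 (min η₀ (v - t₀)) ∈ 𝓝[>] (0 : ℝ) :=
    Ioo_mem_nhdsGT (lt_min hη₀ (sub_pos.mpr hv))
  filter_upwards [hsmall] with η ⟨hη, hηlt⟩
  have hηη₀ : η < η₀ := hηlt.trans_le (min_le_left _ _)
  have hηv : t₀ + η < v := by linarith [hηlt.trans_le (min_le_right _ _)]
  have hgη : IntervalIntegrable g volume t₀ (t₀ + η) :=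
    hgi.mono_set (by rw [uIcc_of_le (by linarith), uIcc_of_le (by linarith)]; gcongr)
  calc η * c = ∫ _ in t₀..t₀ + η, c := by simp
    _ ≤ ∫ s in t₀..t₀ + η, g s :=
      intervalIntegral.integral_mono_on (by linarith) intervalIntegrable_const hgη
        fun s hs => (hIco ⟨hs.1, hs.2.trans_lt hηv⟩).le

lemma nonpos_of_eventually_mul_le {L c : ℝ} {I R : ℝ → ℝ} (hc : 0 < c)
    (hR : Tendsto R (𝓝[>] 0) (𝓝 0)) (hI : ∀ᶠ η in 𝓝[>] 0, η * c ≤ I η)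
    (hLI : ∀ᶠ η in 𝓝[>] 0, L * I η ≤ η * R η) : L ≤ 0 := by
  by_contra! hL
  have hLc : ∀ᶠ η in 𝓝[>] 0, L * c ≤ R η := by
    filter_upwards [hI, hLI, self_mem_nhdsWithin] with η hI hLI (hη : 0 < η)
    have : η * (L * c) ≤ η * R η := by
      calc η * (L * c) = L * (η * c) := by ring
        _ ≤ L * I η := mul_le_mul_of_nonneg_left hI hL.le
        _ ≤ η * R η := hLI
    exact le_of_mul_le_mul_left this hη
  exact (mul_pos hL hc).not_ge (ge_of_tendsto hR hLc)

lemma tendsto_rate_nhdsGT_zero {ρ : ℝ → ℝ} (hρ : Tendsto ρ (𝓝[>] 0) (𝓝 0)) (C : ℝ) :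
    Tendsto (fun η => C * (ρ η + √(ρ √η) + η + √η)) (𝓝[>] 0) (𝓝 0) := by
  have hsqrt : Tendsto Real.sqrt (𝓝[>] 0) (𝓝[>] 0) :=
    tendsto_nhdsWithin_of_tendsto_nhds_of_eventually_within _
      (by simpa using Real.continuous_sqrt.tendsto' 0 0 (by simp) |>.mono_left nhdsWithin_le_nhds)
      (eventually_nhdsWithin_of_forall fun x hx => Real.sqrt_pos.mpr hx)
  have hsqrt₀ : Tendsto Real.sqrt (𝓝 0) (𝓝 0) := Real.continuous_sqrt.tendsto' 0 0 (by simp)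
  have hid : Tendsto (fun η : ℝ => η) (𝓝[>] 0) (𝓝 0) :=
    tendsto_nhdsWithin_of_tendsto_nhds tendsto_id
  simpa using ((((hρ.add (hsqrt₀.comp (hρ.comp hsqrt))).add hid).add
    (tendsto_nhds_of_tendsto_nhdsWithin hsqrt)).const_mul C)

lemma nonpos_of_mul_integral_expectation_le {Ω : Type*} [MeasurableSpace Ω] {μ : Measure Ω}
    [IsProbabilityMeasure μ] {M : ℝ → Ω → ℝ} {t₀ T η₀ L : ℝ} {R : ℝ → ℝ}
    (ht₀ : t₀ < T) (hη₀ : 0 < η₀) (hpos : ∀ s ω, 0 < M s ω)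
    (hrc : ∀ ω, ContinuousWithinAt (fun r => M r ω) (Ici t₀) t₀)
    (hbdd : ∀ ω, BddAbove (range fun s : Icc t₀ T => M s ω))
    (hsup : Integrable (fun ω => ⨆ s : Icc t₀ T, M s ω) μ) (hint : ∀ s, Integrable (M s) μ)
    (hgi : IntervalIntegrable (fun s => ∫ ω, M s ω ∂μ) volume t₀ (t₀ + η₀))
    (hR : Tendsto R (𝓝[>] 0) (𝓝 0))
    (hest : ∀ η, 0 < η → η < η₀ → L * ∫ s in t₀..t₀ + η, (∫ ω, M s ω ∂μ) ≤ η * R η) :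
    L ≤ 0 := by
  have hg₀ : 0 < ∫ ω, M t₀ ω ∂μ := integral_pos_of_forall_pos (hpos t₀) (hint t₀)
  have hg := continuousWithinAt_integral_of_integrable_iSup ht₀ (fun s ω => (hpos s ω).le) hrc hbdd
    hsup hint
  refine nonpos_of_eventually_mul_le (half_pos hg₀) hR
    (eventually_mul_le_intervalIntegral hη₀ hg (half_lt_self hg₀) hgi) ?_
  filter_upwards [Ioo_mem_nhdsGT hη₀] with η hη
  exact hest η hη.1 hη.2
theorem stmt15_general {d : ℕ} (T t₀ η₀ Cc : ℝ) (x₀ : EuclideanSpace ℝ (Fin d))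
    (ht₀ : t₀ < T) (hη₀ : 0 < η₀)
    (φ : ℝ → EuclideanSpace ℝ (Fin d) → ℝ)
    (f : ℝ → EuclideanSpace ℝ (Fin d) → ℝ → EuclideanSpace ℝ (Fin d) →
          (EuclideanSpace ℝ (Fin d) → ℝ) → Matrix (Fin d) (Fin d) ℝ →
          Measure (EuclideanSpace ℝ (Fin d)) → ℝ)
    (ρ : ℝ → ℝ)
    (hρ0 : Tendsto ρ (𝓝[>] 0) (𝓝 0))
    (D1 : Set (Matrix (Fin d) (Fin d) ℝ))
    (D2 : Set (Measure (EuclideanSpace ℝ (Fin d))))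
    (hD1 : D1.Nonempty) (hD2 : D2.Nonempty)
    (hEst : ∀ a ∈ D1, ∀ ν ∈ D2,
      ∃ (Ω' : Type) (mΩ : MeasurableSpace Ω') (μ : @Measure Ω' mΩ)
        (M' : ℝ → Ω' → ℝ),
        IsProbabilityMeasure μ ∧
        (∀ s ω, 0 < M' s ω) ∧
        (∀ ω s, ContinuousWithinAt (fun r => M' r ω) (Set.Ici s) s) ∧
        (∀ ω, BddAbove (Set.range fun s : Set.Icc t₀ T => M' (s : ℝ) ω)) ∧
        Integrable (fun ω => ⨆ s : Set.Icc t₀ T, M' (s : ℝ) ω) μ ∧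
        (∀ s, Integrable (M' s) μ) ∧
        IntervalIntegrable (fun s => ∫ ω, M' s ω ∂μ) MeasureTheory.volume t₀ (t₀ + η₀) ∧
        (∀ η : ℝ, 0 < η → η < η₀ →
          opL φ f t₀ x₀ a ν * ∫ s in t₀..(t₀ + η), (∫ ω, M' s ω ∂μ) ≤
            Cc * η * (ρ η + Real.sqrt (ρ (Real.sqrt η)) + η + Real.sqrt η))) :
    (∀ a ∈ D1, ∀ ν ∈ D2, opL φ f t₀ x₀ a ν ≤ 0) ∧
    0 ≤ -(deriv (fun s => φ s x₀) t₀) -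
        sSup {r : ℝ | ∃ a ∈ D1, ∃ ν ∈ D2,
          r = (1 / 2) * trHess a (φ t₀) x₀ +
              (∫ e, (φ t₀ (x₀ + e) - φ t₀ x₀ - fderiv ℝ (φ t₀) x₀ e) ∂ν) -
              f t₀ x₀ (φ t₀ x₀) (gradient (φ t₀) x₀)
                (fun e => φ t₀ (x₀ + e) - φ t₀ x₀) a ν} := by
  have hL : ∀ a ∈ D1, ∀ ν ∈ D2, opL φ f t₀ x₀ a ν ≤ 0 := by
    intro a ha ν hν
    obtain ⟨Ω', mΩ, μ, M', hprob, hpos, hrc, hbdd, hsup, hint, hgi, hest⟩ := hEst a ha ν hν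
    exact nonpos_of_mul_integral_expectation_le ht₀ hη₀ hpos (fun ω => hrc ω t₀) hbdd hsup hint
      hgi (tendsto_rate_nhdsGT_zero hρ0 Cc)
      fun η hη hηη₀ => (hest η hη hηη₀).trans_eq (by ring)
  refine ⟨hL, sub_nonneg.mpr (csSup_le ?_ ?_)⟩
  · obtain ⟨a, ha⟩ := hD1
    obtain ⟨ν, hν⟩ := hD2
    exact ⟨_, a, ha, ν, hν, rfl⟩
  · rintro r ⟨a, ha, ν, hν, rfl⟩
    have := hL a ha ν hν
    rw [opL] at this
    linarith

/-- Derivation of the viscosity supersolution property.  Let `u` be bounded continuous,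
`φ ∈ C³` touching `u` from below at the minimum point `(t₀, x₀)` of `u − φ`; suppose the
dynamic programming principle yields, for each constant pair `(a,ν) ∈ D¹ × D²`, a measure
`P(a,ν)` of the class together with a positive càdlàg weight `M'` (with integrable
supremum) such that `ℒ^{t₀,x₀}φ(t₀,a,ν) ∫_{t₀}^{t₀+η} E[M'_s] ds ≤
C η (ρ(η) + ρ^{1/2}(√η) + η + √η)` for all small `η > 0`.  Then, dividing by `η` and
letting `η → 0`, `ℒ^{t₀,x₀}φ(t₀,a,ν) ≤ 0` for every `(a,ν)`, and taking the supremum over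
`(a,ν)` yields the supersolution inequality `−∂_tφ(t₀,x₀) − ĥ(t₀,x₀,…) ≥ 0`. -/
theorem stmt15 {d : ℕ} (T t₀ η₀ Cc : ℝ) (x₀ : EuclideanSpace ℝ (Fin d))
    (ht₀ : t₀ < T) (hη₀ : 0 < η₀) (hη₀T : t₀ + η₀ ≤ T)
    (u φ : ℝ → EuclideanSpace ℝ (Fin d) → ℝ)
    (f : ℝ → EuclideanSpace ℝ (Fin d) → ℝ → EuclideanSpace ℝ (Fin d) →
          (EuclideanSpace ℝ (Fin d) → ℝ) → Matrix (Fin d) (Fin d) ℝ →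
          Measure (EuclideanSpace ℝ (Fin d)) → ℝ)
    (ρ : ℝ → ℝ) (hρmono : Monotone ρ) (hρnn : ∀ r, 0 ≤ ρ r)
    (hρ0 : Tendsto ρ (𝓝[>] 0) (𝓝 0))
    (D1 : Set (Matrix (Fin d) (Fin d) ℝ))
    (D2 : Set (Measure (EuclideanSpace ℝ (Fin d))))
    (hD1 : D1.Nonempty) (hD2 : D2.Nonempty)
    (hu_cont : Continuous fun p : ℝ × EuclideanSpace ℝ (Fin d) => u p.1 p.2)
    (hu_bdd : ∃ Kb : ℝ, ∀ t x, |u t x| ≤ Kb)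
    (hφ : ContDiff ℝ 3 fun p : ℝ × EuclideanSpace ℝ (Fin d) => φ p.1 p.2)
    (hφ_bdd : ∃ Kb : ℝ, ∀ t x, |φ t x| ≤ Kb)
    (htouch : u t₀ x₀ = φ t₀ x₀) (hmin : ∀ t x, φ t x ≤ u t x)
    (hintν : ∀ ν ∈ D2, Integrable
        (fun e => φ t₀ (x₀ + e) - φ t₀ x₀ - fderiv ℝ (φ t₀) x₀ e) ν)
    (hEst : ∀ a ∈ D1, ∀ ν ∈ D2,
      ∃ (Ω' : Type) (mΩ : MeasurableSpace Ω') (μ : @Measure Ω' mΩ)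
        (M' : ℝ → Ω' → ℝ),
        IsProbabilityMeasure μ ∧
        (∀ s ω, 0 < M' s ω) ∧
        (∀ ω s, ContinuousWithinAt (fun r => M' r ω) (Set.Ici s) s) ∧
        (∀ ω, BddAbove (Set.range fun s : Set.Icc t₀ T => M' (s : ℝ) ω)) ∧
        Integrable (fun ω => ⨆ s : Set.Icc t₀ T, M' (s : ℝ) ω) μ ∧
        (∀ s, Integrable (M' s) μ) ∧
        IntervalIntegrable (fun s => ∫ ω, M' s ω ∂μ) MeasureTheory.volume t₀ (t₀ + η₀) ∧
        (∀ η : ℝ, 0 < η → η < η₀ →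
          opL φ f t₀ x₀ a ν * ∫ s in t₀..(t₀ + η), (∫ ω, M' s ω ∂μ) ≤
            Cc * η * (ρ η + Real.sqrt (ρ (Real.sqrt η)) + η + Real.sqrt η))) :
    (∀ a ∈ D1, ∀ ν ∈ D2, opL φ f t₀ x₀ a ν ≤ 0) ∧
    0 ≤ -(deriv (fun s => φ s x₀) t₀) -
        sSup {r : ℝ | ∃ a ∈ D1, ∃ ν ∈ D2,
          r = (1 / 2) * trHess a (φ t₀) x₀ +
              (∫ e, (φ t₀ (x₀ + e) - φ t₀ x₀ - fderiv ℝ (φ t₀) x₀ e) ∂ν) -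
              f t₀ x₀ (φ t₀ x₀) (gradient (φ t₀) x₀)
                (fun e => φ t₀ (x₀ + e) - φ t₀ x₀) a ν} :=
  stmt15_general T t₀ η₀ Cc x₀ ht₀ hη₀ φ f ρ hρ0 D1 D2 hD1 hD2 hEst
end
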